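/- Let S be an even lattice of rank 3 whose real quadratic form has signature (2,1) (two positive and one negative square) and whose discriminant group S∨/S is isomorphic to (ℤ/2ℤ)³. Then S(1/2) is an odd unimodular lattice of signature (2,1), and S is isometric to the lattice with Gram matrix diag(2,2,−2); equivalently, S(1/2) is isometric to ⟨1⟩⊕⟨1⟩⊕⟨−1⟩. -/

import Mathlib

open Matrix

/-- An integral lattice: a free `ℤ`-module `Fin rank → ℤ` equipped with a symmetric
integer Gram matrix. -/
structure IntLattice where
  rank : ℕ
  gram : Matrix (Fin rank) (Fin rank) ℤ
  symm : gram.IsSymm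

namespace IntLattice

/-- The bilinear form of the lattice. -/
def bilin (L : IntLattice) (x y : Fin L.rank → ℤ) : ℤ := x ⬝ᵥ (L.gram *ᵥ y)

lemma gram_symm_apply (L : IntLattice) (i j : Fin L.rank) : L.gram j i = L.gram i j :=
  congrFun (congrFun L.symm i) j

lemma bilin_comm (L : IntLattice) (x y : Fin L.rank → ℤ) :
    L.bilin x y = L.bilin y x := by
  simp only [bilin, dotProduct, mulVec, Finset.mul_sum]
  rw [Finset.sum_comm]
  exact Finset.sum_congr rfl fun j _ => Finset.sum_congr rfl fun i _ => by
    rw [L.gram_symm_apply i j]; ring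

/-- The lattice is even: all norms are even. -/
def IsEven (L : IntLattice) : Prop := ∀ x, 2 ∣ L.bilin x x

/-- The lattice is unimodular: the Gram matrix has determinant `±1`, equivalently the
map `L → Hom(L,ℤ)` is bijective. -/
def IsUnimodular (L : IntLattice) : Prop := IsUnit L.gram.det

/-- Positive definite lattice. -/
def PosDef (L : IntLattice) : Prop := ∀ x, x ≠ 0 → 0 < L.bilin x x

/-- The real quadratic form of the lattice has `p` positive and `q` negative squares. -/
def HasSignature (L : IntLattice) (p q : ℕ) : Prop :=
  L.rank = p + q ∧
  ∃ Q : Matrix (Fin L.rank) (Fin L.rank) ℝ, IsUnit Q.det ∧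
    Qᵀ * (L.gram.map ((↑) : ℤ → ℝ)) * Q =
      Matrix.diagonal (fun i : Fin L.rank => if (i : ℕ) < p then (1 : ℝ) else -1)

/-- The rational extension of the bilinear form. -/
def qbilin (L : IntLattice) (x y : Fin L.rank → ℚ) : ℚ :=
  x ⬝ᵥ ((L.gram.map ((↑) : ℤ → ℚ)) *ᵥ y)

end IntLattice

def castVec {N : ℕ} (x : Fin N → ℤ) : Fin N → ℚ := fun i => (x i : ℚ)

def castHom (N : ℕ) : (Fin N → ℤ) →+ (Fin N → ℚ) where
  toFun := castVec
  map_zero' := by funext i; simp [castVec]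
  map_add' a b := by funext i; simp [castVec]

namespace IntLattice

/-- The dual lattice `L∨ = {x ∈ L⊗ℚ : ⟨x,L⟩ ⊆ ℤ}`, as an additive subgroup of `ℚ^rank`. -/
def dualSub (L : IntLattice) : AddSubgroup (Fin L.rank → ℚ) where
  carrier := {x | ∀ y : Fin L.rank → ℤ, ∃ m : ℤ, L.qbilin x (castVec y) = m}
  add_mem' := by
    intro a b ha hb y
    obtain ⟨m, hm⟩ := ha y
    obtain ⟨m', hm'⟩ := hb y
    refine ⟨m + m', ?_⟩
    simp only [qbilin, add_dotProduct] at *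
    rw [hm, hm']; push_cast; ring
  zero_mem' := by
    intro y
    exact ⟨0, by simp [qbilin]⟩
  neg_mem' := by
    intro a ha y
    obtain ⟨m, hm⟩ := ha y
    refine ⟨-m, ?_⟩
    simp only [qbilin, neg_dotProduct] at *
    rw [hm]; push_cast; ring

/-- The image of `L` inside `L⊗ℚ`. -/
def latticeIn (L : IntLattice) : AddSubgroup (Fin L.rank → ℚ) := (castHom L.rank).range

/-- The discriminant group `A_L = L∨/L`. -/
abbrev discGroup (L : IntLattice) : Type :=
  ↥(L.dualSub) ⧸ (L.latticeIn).addSubgroupOf L.dualSub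

/-- Projection from the dual lattice to the discriminant group. -/
def dmk (L : IntLattice) : L.dualSub → L.discGroup := QuotientAddGroup.mk

/-- `g : A_M → A_N` carries the discriminant quadratic form `q_M` to `q_N`
(values in `ℚ/2ℤ`). -/
def QFormIso (M N : IntLattice) (g : M.discGroup ≃+ N.discGroup) : Prop :=
  ∀ x : M.dualSub, ∃ y : N.dualSub,
    N.dmk y = g (M.dmk x) ∧ ∃ m : ℤ, N.qbilin ↑y ↑y - M.qbilin ↑x ↑x = 2 * (m : ℚ)

/-- `g : A_M → A_N` carries the discriminant quadratic form `q_M` to `-q_N`. -/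
def QFormIsoNeg (M N : IntLattice) (g : M.discGroup ≃+ N.discGroup) : Prop :=
  ∀ x : M.dualSub, ∃ y : N.dualSub,
    N.dmk y = g (M.dmk x) ∧ ∃ m : ℤ, N.qbilin ↑y ↑y + M.qbilin ↑x ↑x = 2 * (m : ℚ)

/-- The integer matrix `F` defines an isometry `M → N` of lattices (`x ↦ F *ᵥ x`). -/
def MatIsometry (M N : IntLattice) (F : Matrix (Fin N.rank) (Fin M.rank) ℤ) : Prop :=
  (∃ F' : Matrix (Fin M.rank) (Fin N.rank) ℤ, F * F' = 1 ∧ F' * F = 1) ∧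
  Fᵀ * N.gram * F = M.gram

/-- The lattices `M` and `N` are isometric. -/
def Isometric (M N : IntLattice) : Prop := ∃ F, MatIsometry M N F

end IntLattice

/-- The rows of `B` form a `ℤ`-basis of the submodule `S`. -/
def IsBasisOf {N : ℕ} (S : Submodule ℤ (Fin N → ℤ)) {r : ℕ}
    (B : Matrix (Fin r) (Fin N) ℤ) : Prop :=
  (∀ i, B i ∈ S) ∧ ∀ x ∈ S, ∃! c : Fin r → ℤ, x = Matrix.vecMul c B

namespace IntLattice

/-- Gram matrix of the vectors given by the rows of `B`. -/
def gramOf (L : IntLattice) {r : ℕ} (B : Matrix (Fin r) (Fin L.rank) ℤ) :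
    Matrix (Fin r) (Fin r) ℤ := Matrix.of fun i j => L.bilin (B i) (B j)

lemma gramOf_isSymm (L : IntLattice) {r : ℕ} (B : Matrix (Fin r) (Fin L.rank) ℤ) :
    (L.gramOf B).IsSymm := by
  unfold Matrix.IsSymm
  ext i j
  simp only [transpose_apply, gramOf, Matrix.of_apply]
  exact L.bilin_comm _ _

/-- The sublattice of `L` spanned by the rows of `B`, as an abstract lattice. -/
def sub (L : IntLattice) {r : ℕ} (B : Matrix (Fin r) (Fin L.rank) ℤ) : IntLattice :=
  ⟨r, L.gramOf B, L.gramOf_isSymm B⟩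

/-- `M(1/2)`: the same module with the form divided by two. -/
abbrev halfL (M : IntLattice) : IntLattice :=
  ⟨M.rank, M.gram.map (fun z => z / 2), M.symm.map _⟩

end IntLattice

/-- Orthogonal direct sum of Gram matrices. -/
def dsumGram {m k : ℕ} (A : Matrix (Fin m) (Fin m) ℤ) (B : Matrix (Fin k) (Fin k) ℤ) :
    Matrix (Fin (m + k)) (Fin (m + k)) ℤ :=
  Matrix.of fun i j =>
    if hi : (i : ℕ) < m then
      if hj : (j : ℕ) < m then A ⟨i, hi⟩ ⟨j, hj⟩ else 0
    else
      if hj : (j : ℕ) < m then 0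
      else B ⟨(i : ℕ) - m, by omega⟩ ⟨(j : ℕ) - m, by omega⟩

lemma dsumGram_isSymm {m k : ℕ} {A : Matrix (Fin m) (Fin m) ℤ}
    {B : Matrix (Fin k) (Fin k) ℤ} (hA : A.IsSymm) (hB : B.IsSymm) :
    (dsumGram A B).IsSymm := by
  unfold Matrix.IsSymm
  ext i j
  simp only [transpose_apply, dsumGram, Matrix.of_apply]
  have hA' : ∀ a b, A b a = A a b := fun a b => congrFun (congrFun hA a) b
  have hB' : ∀ a b, B b a = B a b := fun a b => congrFun (congrFun hB a) b
  by_cases hi : (i : ℕ) < m <;> by_cases hj : (j : ℕ) < m <;> simp [hi, hj]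
  · exact hA' _ _
  · exact hB' _ _

/-- Orthogonal direct sum of lattices. -/
def IntLattice.dsum (M N : IntLattice) : IntLattice :=
  ⟨M.rank + N.rank, dsumGram M.gram N.gram, dsumGram_isSymm M.symm N.symm⟩

/-- The lattice with diagonal Gram matrix `diag d`. -/
def diagL {r : ℕ} (d : Fin r → ℤ) : IntLattice :=
  ⟨r, Matrix.diagonal d, Matrix.isSymm_diagonal d⟩

/-- The hyperbolic plane `U`. -/
def UL : IntLattice := ⟨2, Matrix.of !![0, 1; 1, 0], by decide⟩

/-- The negative definite even unimodular lattice `E₈` (negative of the `E₈` Cartan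
matrix; node `0` is the branch node with arms `1`, `2-3`, `4-5-6-7`). -/
def E8L : IntLattice :=
  ⟨8, !![-2,  1,  1,  0,  1,  0,  0,  0;
          1, -2,  0,  0,  0,  0,  0,  0;
          1,  0, -2,  1,  0,  0,  0,  0;
          0,  0,  1, -2,  0,  0,  0,  0;
          1,  0,  0,  0, -2,  1,  0,  0;
          0,  0,  0,  0,  1, -2,  1,  0;
          0,  0,  0,  0,  0,  1, -2,  1;
          0,  0,  0,  0,  0,  0,  1, -2], by decide⟩

/-- The rank-two lattice with Gram matrix `[[a,b],[b,d]]`. -/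
def sym2L (a b d : ℤ) : IntLattice :=
  ⟨2, !![a, b; b, d], by
    unfold Matrix.IsSymm
    ext i j
    fin_cases i <;> fin_cases j <;> simp⟩

/-- The `ε`-eigenspace of an involution `φ`. -/
def eigenSub {n : ℕ} (φ : (Fin n → ℤ) ≃ₗ[ℤ] (Fin n → ℤ)) (ε : ℤ) :
    Submodule ℤ (Fin n → ℤ) where
  carrier := {x | φ x = ε • x}
  add_mem' := by
    intro a b ha hb
    simp only [Set.mem_setOf_eq] at *
    rw [map_add, ha, hb, smul_add]
  zero_mem' := by simp
  smul_mem' := by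
    intro c x hx
    simp only [Set.mem_setOf_eq] at *
    rw [_root_.map_smul, hx, smul_comm]

/-- The orthogonal complement of a set of vectors in `L`. -/
def perpOfSet (L : IntLattice) (S : Set (Fin L.rank → ℤ)) :
    Submodule ℤ (Fin L.rank → ℤ) where
  carrier := {x | ∀ s ∈ S, L.bilin x s = 0}
  add_mem' := by
    intro a b ha hb s hs
    have ha' := ha s hs
    have hb' := hb s hs
    simp only [IntLattice.bilin] at ha' hb' ⊢
    rw [add_dotProduct, ha', hb', add_zero]
  zero_mem' := by
    intro s hs
    simp [IntLattice.bilin]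
  smul_mem' := by
    intro c x hx s hs
    have hx' := hx s hs
    simp only [IntLattice.bilin] at hx' ⊢
    rw [smul_dotProduct, hx', smul_zero]

/-- `P` is a primitive lattice vector. -/
def Primitive {n : ℕ} (P : Fin n → ℤ) : Prop :=
  P ≠ 0 ∧ ∀ (m : ℤ) (y : Fin n → ℤ), P = m • y → IsUnit m

/-- An integral polarized K3 involution `(L, φ, P′)`: `L` is an even unimodular lattice
of signature `(3,19)`, `φ` a form-preserving involution with hyperbolic fixed lattice,
and `P′` a polarization with `φ(P′) = -P′` and `(P′)² > 0`. -/
structure K3Inv where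
  L : IntLattice
  even : L.IsEven
  unimod : L.IsUnimodular
  sig : L.HasSignature 3 19
  φ : (Fin L.rank → ℤ) ≃ₗ[ℤ] (Fin L.rank → ℤ)
  φ_isom : ∀ x y, L.bilin (φ x) (φ y) = L.bilin x y
  φ_invol : ∀ x, φ (φ x) = x
  P' : Fin L.rank → ℤ
  φP' : φ P' = -P'
  P'pos : 0 < L.bilin P' P'
  fixed_hyp : ∃ (r : ℕ) (B : Matrix (Fin r) (Fin L.rank) ℤ),
    IsBasisOf (eigenSub φ 1) B ∧ (L.sub B).HasSignature 1 (r - 1)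

/-- Isomorphism of integral polarized K3 involutions. -/
def K3Iso (K K' : K3Inv) : Prop :=
  ∃ f : (Fin K.L.rank → ℤ) ≃ₗ[ℤ] (Fin K'.L.rank → ℤ),
    (∀ x y, K'.L.bilin (f x) (f y) = K.L.bilin x y) ∧
    f K.P' = K'.P' ∧
    ∀ x, K'.φ (f x) = f (K.φ x)

/-- `(L,φ,P′)` has genus invariants `(r, a, δ_φ; k, n, δ_P, δ_{φP})`. -/
def HasGenusInvariants (K : K3Inv) (r a δφ k : ℕ) (n : ℤ) (δP δφP : ℕ) : Prop :=
  (δφ = 0 ∨ δφ = 1) ∧ (δP = 0 ∨ δP = 1) ∧ (δφP = 0 ∨ δφP = 1) ∧ 1 ≤ k ∧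
  (∃ B : Matrix (Fin r) (Fin K.L.rank) ℤ,
      IsBasisOf (eigenSub K.φ 1) B ∧
      Nonempty ((K.L.sub B).discGroup ≃+ (Fin a → ZMod 2))) ∧
  (δφ = 0 ↔ ∀ x, 2 ∣ K.L.bilin x (K.φ x)) ∧
  ∃ P : Fin K.L.rank → ℤ, Primitive P ∧ K.P' = (k : ℤ) • P ∧ n = K.L.bilin P P ∧
    (δP = 0 ↔ ∀ y ∈ eigenSub K.φ (-1), 2 ∣ K.L.bilin P y) ∧
    (δφP = 0 ↔ ∀ x, 2 ∣ (K.L.bilin x (K.φ x) - K.L.bilin x P))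

/-- Two even lattices belong to the same genus: equal signatures over `ℝ` and
isomorphic discriminant quadratic forms. -/
def SameGenus (M N : IntLattice) : Prop :=
  (∃ p q, M.HasSignature p q ∧ N.HasSignature p q) ∧
  ∃ g : M.discGroup ≃+ N.discGroup, IntLattice.QFormIso M N g

/-- The `p`-primary part of an abelian group. -/
def primaryPart (p : ℕ) (G : Type*) [AddCommGroup G] : AddSubgroup G where
  carrier := {x | ∃ j : ℕ, p ^ j • x = 0}
  add_mem' := by
    rintro a b ⟨j, hj⟩ ⟨l, hl⟩
    refine ⟨j + l, ?_⟩
    rw [smul_add]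
    have h1 : p ^ (j + l) • a = 0 := by rw [pow_add, mul_comm, mul_smul, hj, smul_zero]
    have h2 : p ^ (j + l) • b = 0 := by rw [pow_add, mul_smul, hl, smul_zero]
    rw [h1, h2, add_zero]
  zero_mem' := ⟨0, smul_zero _⟩
  neg_mem' := by
    rintro a ⟨j, hj⟩
    exact ⟨j, by rw [smul_neg, hj, neg_zero]⟩

/-- A pair `(M, τ)`: an even lattice `M` in the genus of the reference lattice `R`
together with an isomorphism `τ : q_M → q_R` of discriminant quadratic forms. -/
structure QPairR (R : IntLattice) where
  M : IntLattice
  even : M.IsEven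
  genus : SameGenus M R
  τ : M.discGroup ≃+ R.discGroup
  hτ : IntLattice.QFormIso M R τ

/-- Equivalence of pairs: `(M,τ) ∼ (M̃,τ̃)` iff there is an isometry `f : M → M̃`
with `τ = τ̃ ∘ f̄`, where `f̄` is the induced map on discriminant groups. -/
def QPairREquiv {R : IntLattice} (p p' : QPairR R) : Prop :=
  ∃ F : Matrix (Fin p'.M.rank) (Fin p.M.rank) ℤ,
    IntLattice.MatIsometry p.M p'.M F ∧
    ∀ (x : p.M.dualSub) (y : p'.M.dualSub),
      (y : Fin p'.M.rank → ℚ) = (F.map ((↑) : ℤ → ℚ)) *ᵥ (x : Fin p.M.rank → ℚ) →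
      p.τ (p.M.dmk x) = p'.τ (p'.M.dmk y)

/-- `τ` is an isomorphism from the discriminant bilinear form of `M(1/2)` to the
standard form `b_{⟨-n/2⟩}` on `ℤ/(n/2)`, which sends `(x̄,ȳ)` to `-2xy/n mod ℤ`. -/
def BIsoStd (M : IntLattice) (n : ℤ) (τ : (M.halfL).discGroup ≃+ ZMod (n / 2).toNat) :
    Prop :=
  ∀ (x y : (M.halfL).dualSub) (α β : ℤ),
    ((α : ZMod (n / 2).toNat) = τ ((M.halfL).dmk x)) →
    ((β : ZMod (n / 2).toNat) = τ ((M.halfL).dmk y)) →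
    ∃ m : ℤ, (M.halfL).qbilin ↑x ↑y + (2 * α * β : ℚ) / (n : ℚ) = (m : ℚ)

/-- A pair `(M, τ)`: an even lattice `M` in the genus of the reference lattice `R`
together with an isomorphism `τ : b_{M(1/2)} → b_{⟨-n/2⟩}` of discriminant bilinear
forms. -/
structure BPairR (R : IntLattice) (n : ℤ) where
  M : IntLattice
  even : M.IsEven
  genus : SameGenus M R
  τ : (M.halfL).discGroup ≃+ ZMod (n / 2).toNat
  hτ : BIsoStd M n τ

/-- Equivalence of pairs `(M,τ) ∼ (M̃,τ̃)`: there is an isometry `f : M → M̃` with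
`τ = τ̃ ∘ f̄`. -/
def BPairREquiv {R : IntLattice} {n : ℤ} (p p' : BPairR R n) : Prop :=
  ∃ F : Matrix (Fin p'.M.rank) (Fin p.M.rank) ℤ,
    IntLattice.MatIsometry p.M p'.M F ∧
    ∀ (x : (p.M.halfL).dualSub) (y : (p'.M.halfL).dualSub),
      (y : Fin p'.M.rank → ℚ) = (F.map ((↑) : ℤ → ℚ)) *ᵥ (x : Fin p.M.rank → ℚ) →
      p.τ ((p.M.halfL).dmk x) = p'.τ ((p'.M.halfL).dmk y)

/-- `g` is an isomorphism `b_{⟨n/2⟩} → -b_{⟨n/2⟩}` of finite bilinear forms on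
`ℤ/(n/2)`, where `b_{⟨n/2⟩}(x̄,ȳ) = 2xy/n mod ℤ`. -/
def NegBIso (n : ℤ) (g : ZMod (n / 2).toNat ≃+ ZMod (n / 2).toNat) : Prop :=
  ∀ x y x' y' : ℤ,
    ((x' : ZMod (n / 2).toNat) = g ((x : ℤ) : ZMod (n / 2).toNat)) →
    ((y' : ZMod (n / 2).toNat) = g ((y : ℤ) : ZMod (n / 2).toNat)) →
    n ∣ 2 * (x' * y' + x * y)

/-- `g` preserves the restriction to the 2-primary part of the discriminant quadratic
form `q(x̄,ȳ) = x²/2 - y²/n mod 2ℤ` of `⟨2⟩⊕⟨-n⟩` on `ℤ/2 × ℤ/n`. -/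
def QPres2 (n : ℤ)
    (g : primaryPart 2 (ZMod 2 × ZMod n.toNat) ≃+ primaryPart 2 (ZMod 2 × ZMod n.toNat)) :
    Prop :=
  ∀ (x : primaryPart 2 (ZMod 2 × ZMod n.toNat)) (α β α' β' : ℤ),
    ((α : ZMod 2) = (x : ZMod 2 × ZMod n.toNat).1) →
    ((β : ZMod n.toNat) = (x : ZMod 2 × ZMod n.toNat).2) →
    ((α' : ZMod 2) = ((g x : primaryPart 2 (ZMod 2 × ZMod n.toNat)) : ZMod 2 × ZMod n.toNat).1) →
    ((β' : ZMod n.toNat) = ((g x : primaryPart 2 (ZMod 2 × ZMod n.toNat)) : ZMod 2 × ZMod n.toNat).2) →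
    (4 * n) ∣ (n * (α' ^ 2 - α ^ 2) - 2 * (β' ^ 2 - β ^ 2))

/-- `g` preserves the restriction to the 2-primary part of the discriminant bilinear
form `b(x̄,ȳ) = -2xy/n mod ℤ` of `⟨-n/2⟩` on `ℤ/(n/2)`. -/
def BPres2 (n : ℤ)
    (g : primaryPart 2 (ZMod (n / 2).toNat) ≃+ primaryPart 2 (ZMod (n / 2).toNat)) :
    Prop :=
  ∀ (x y : primaryPart 2 (ZMod (n / 2).toNat)) (α β α' β' : ℤ),
    ((α : ZMod (n / 2).toNat) = (x : ZMod (n / 2).toNat)) →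
    ((β : ZMod (n / 2).toNat) = (y : ZMod (n / 2).toNat)) →
    ((α' : ZMod (n / 2).toNat) = ((g x : primaryPart 2 (ZMod (n / 2).toNat)) : ZMod (n / 2).toNat)) →
    ((β' : ZMod (n / 2).toNat) = ((g y : primaryPart 2 (ZMod (n / 2).toNat)) : ZMod (n / 2).toNat)) →
    n ∣ 2 * (α' * β' - α * β)

/-!
The discriminant group of `S` is `ℤ³ / Gℤ³`, `G` the Gram matrix, and it is `(ℤ/2)³` exactly
when `Gℤ³ = 2ℤ³`, i.e. when `G = 2K` with `K` unimodular. So `S(1/2)` is an integral unimodular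
lattice of signature `(2,1)`, and it remains to show that such a lattice is `⟨1⟩ ⊕ ⟨1⟩ ⊕ ⟨-1⟩`.

Choose `v` whose norm `-m < 0` is as close to `0` as possible. Then `v` is primitive, and as `K`
is unimodular, `ℤv ⊕ v^⊥` has index `m` in `ℤ³`, where `v^⊥` is a positive definite binary
lattice of determinant `m`. Gauss reduction yields `u ∈ v^⊥` with `0 < 3 (u²)² ≤ 4m`; for
`m ≥ 2` the norm `(v + u)² = u² - m` lies in `(-m, 0)`, contradicting the choice of `v`. Hence
`m = 1`, `ℤ³ = ℤv ⊕ v^⊥`, and the unimodular positive definite binary lattice `v^⊥` is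
`⟨1⟩ ⊕ ⟨1⟩`.
-/

section Congruence

variable {R : Type*} [CommRing R] {m n : Type*} [Fintype m]

theorem Matrix.dotProduct_transpose_mul_mul_mulVec [Fintype n] (T : Matrix m n R)
    (K : Matrix m m R) (x y : n → R) :
    x ⬝ᵥ (Tᵀ * K * T) *ᵥ y = (T *ᵥ x) ⬝ᵥ K *ᵥ (T *ᵥ y) := by
  rw [← mulVec_mulVec, ← mulVec_mulVec, dotProduct_mulVec, vecMul_transpose]

theorem Matrix.transpose_mul_mul_apply [Fintype n] [DecidableEq n] (T : Matrix m n R)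
    (K : Matrix m m R) (i j : n) : (Tᵀ * K * T) i j = T.col i ⬝ᵥ K *ᵥ T.col j := by
  rw [← mulVec_single_one, ← mulVec_single_one, ← dotProduct_transpose_mul_mul_mulVec,
    mulVec_single_one, single_one_dotProduct, col_apply]

theorem Matrix.transpose_mul_mul_mul_mul (A : Matrix m m R) (B : Matrix m n R)
    (K : Matrix m m R) : (A * B)ᵀ * K * (A * B) = Bᵀ * (Aᵀ * K * A) * B := by
  simp only [transpose_mul, Matrix.mul_assoc]

theorem Matrix.IsSymm.transpose_mul_mul {K : Matrix m m R} (hK : K.IsSymm) (T : Matrix m n R) :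
    (Tᵀ * K * T).IsSymm := by
  simp only [IsSymm, transpose_mul, transpose_transpose, hK.eq, Matrix.mul_assoc]

theorem Matrix.IsSymm.dotProduct_mulVec_eq {K : Matrix m m R} (hK : K.IsSymm) (x y : m → R) :
    x ⬝ᵥ K *ᵥ y = (K *ᵥ x) ⬝ᵥ y := by
  rw [dotProduct_mulVec, ← mulVec_transpose, hK.eq]

theorem Matrix.det_transpose_mul_mul [DecidableEq m] (T K : Matrix m m R) :
    (Tᵀ * K * T).det = T.det ^ 2 * K.det := by
  rw [det_mul, det_mul, det_transpose]; ring

theorem Matrix.transpose_nonsing_inv_mul_mul [DecidableEq m] {M K D : Matrix m m R}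
    (hM : IsUnit M.det) (h : Mᵀ * K * M = D) : (M⁻¹)ᵀ * D * M⁻¹ = K := by
  rw [← h, ← transpose_mul_mul_mul_mul, mul_nonsing_inv _ hM, transpose_one, Matrix.one_mul,
    Matrix.mul_one]

theorem Int.cast_dotProduct_mulVec {S : Type*} [CommRing S] (K : Matrix m m ℤ) (x y : m → ℤ) :
    ((x ⬝ᵥ K *ᵥ y : ℤ) : S) = (Int.cast ∘ x) ⬝ᵥ K.map Int.cast *ᵥ (Int.cast ∘ y) := by
  rw [← eq_intCast (Int.castRingHom S), RingHom.map_dotProduct]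
  congr 1
  ext i
  exact RingHom.map_mulVec _ K y i

variable [DecidableEq m] {K : Matrix m m ℤ}

theorem Matrix.apply_self_pos (hK : ∀ x ≠ 0, 0 < x ⬝ᵥ K *ᵥ x) (i : m) : 0 < K i i := by
  simpa [mulVec_single_one] using hK (Pi.single i 1) (by simp)

theorem Matrix.transpose_mul_mul_pos (hK : ∀ x ≠ 0, 0 < x ⬝ᵥ K *ᵥ x) {T : Matrix m m ℤ}
    (hT : T.det ≠ 0) : ∀ x ≠ 0, 0 < x ⬝ᵥ (Tᵀ * K * T) *ᵥ x := fun x hx => by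
  rw [dotProduct_transpose_mul_mul_mulVec]
  exact hK _ fun h => hx (eq_zero_of_mulVec_eq_zero hT h)

end Congruence

theorem AddMonoidHom.eq_zero_iff_two_dvd {κ ι : Type*} [Fintype κ] [Fintype ι]
    (φ : (κ → ℤ) →+ (ι → ZMod 2)) (hφ : Function.Surjective φ)
    (hcard : Fintype.card ι = Fintype.card κ) (w : κ → ℤ) : φ w = 0 ↔ ∀ i, 2 ∣ w i := by
  classical
  -- `φ` factors through reduction mod 2, and the induced map is bijective by counting
  let ψ : (κ → ZMod 2) → (ι → ZMod 2) := fun t => φ fun i => ((t i).val : ℤ)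
  have hψ (w : κ → ℤ) : ψ (fun i => (w i : ZMod 2)) = φ w := by
    have hw : w = (fun i => ((w i : ZMod 2).val : ℤ)) + 2 • fun i => w i / 2 := by
      ext i
      simp only [Pi.add_apply, Pi.smul_apply]
      simp only [nsmul_eq_mul, ZMod.val_intCast]
      push_cast
      omega
    have h2 (y : ι → ZMod 2) : 2 • y = 0 := by
      ext i; rw [Pi.smul_apply, two_nsmul, CharTwo.add_self_eq_zero, Pi.zero_apply]
    conv_rhs => rw [hw]
    rw [map_add, map_nsmul, h2, add_zero]
  have hψ_bij : ψ.Bijective := by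
    refine (Fintype.bijective_iff_surjective_and_card ψ).mpr ⟨fun y => ?_, by simp [hcard]⟩
    obtain ⟨w, rfl⟩ := hφ y
    exact ⟨_, hψ w⟩
  have hψ0 : ψ 0 = 0 := by
    simp only [ψ, Pi.zero_apply, ZMod.val_zero, Nat.cast_zero]
    exact map_zero φ
  rw [← hψ, ← hψ0, hψ_bij.injective.eq_iff, funext_iff]
  simp only [Pi.zero_apply, ZMod.intCast_zmod_eq_zero_iff_dvd, Nat.cast_ofNat]

theorem Matrix.two_dvd_and_isUnit_det_half {n : Type*} [Fintype n] [DecidableEq n]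
    {G : Matrix n n ℤ} (hG : ∀ w, (∃ u, G *ᵥ u = w) ↔ ∀ i, 2 ∣ w i) :
    (∀ i j, 2 ∣ G i j) ∧ IsUnit (G.map (· / 2)).det := by
  have heven (i j : n) : 2 ∣ G i j := by
    simpa [mulVec_single_one] using (hG (G *ᵥ Pi.single j 1)).mp ⟨_, rfl⟩ i
  refine ⟨heven, (isUnit_iff_isUnit_det _).mp (mulVec_surjective_iff_isUnit.mp fun y => ?_)⟩
  obtain ⟨u, hu⟩ := (hG (2 • y)).mpr fun i => by simp
  have hG2 : G = (2 : ℤ) • G.map (· / 2) := by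
    ext i j; simp [Int.mul_ediv_cancel' (heven i j)]
  rw [hG2, smul_mulVec] at hu
  exact ⟨u, smul_right_injective _ two_ne_zero hu⟩

namespace IntLattice

section Discriminant

variable (L : IntLattice)

theorem qbilin_castVec (x : Fin L.rank → ℚ) (y : Fin L.rank → ℤ) :
    L.qbilin x (castVec y) = (L.gram.map ((↑) : ℤ → ℚ) *ᵥ x) ⬝ᵥ castVec y :=
  Matrix.IsSymm.dotProduct_mulVec_eq (L.symm.map _) x _

theorem castVec_mulVec (u : Fin L.rank → ℤ) :
    castVec (L.gram *ᵥ u) = L.gram.map ((↑) : ℤ → ℚ) *ᵥ castVec u :=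
  funext (RingHom.map_mulVec (Int.castRingHom ℚ) L.gram u)

theorem mem_dualSub_iff {x : Fin L.rank → ℚ} :
    x ∈ L.dualSub ↔ ∃ w, L.gram.map ((↑) : ℤ → ℚ) *ᵥ x = castVec w := by
  constructor
  · intro hx
    choose w hw using fun i => hx (Pi.single i 1)
    refine ⟨w, funext fun i => ?_⟩
    have hsingle : castVec (Pi.single i 1 : Fin L.rank → ℤ) = Pi.single i 1 := by
      ext j; simp [castVec, Pi.single_apply]
    rw [show castVec w i = (w i : ℚ) from rfl, ← hw, qbilin_castVec, hsingle,
      dotProduct_single_one]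
  · rintro ⟨w, hw⟩ y
    exact ⟨w ⬝ᵥ y, by simp [qbilin_castVec, hw, castVec, dotProduct]⟩

variable {L}

theorem isUnit_det_gram_map (hL : L.gram.det ≠ 0) : IsUnit (L.gram.map ((↑) : ℤ → ℚ)).det := by
  rw [← Int.cast_det, isUnit_iff_ne_zero]
  exact_mod_cast hL

noncomputable def dualOfCoord (hL : L.gram.det ≠ 0) : (Fin L.rank → ℤ) →+ L.dualSub :=
  (((L.gram.map ((↑) : ℤ → ℚ))⁻¹.mulVecLin.toAddMonoidHom).comp (castHom L.rank)).codRestrict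
    L.dualSub fun w => L.mem_dualSub_iff.mpr
      ⟨w, by simp [castHom, mulVec_mulVec, mul_nonsing_inv _ (isUnit_det_gram_map hL)]⟩

noncomputable def discOfCoord (hL : L.gram.det ≠ 0) : (Fin L.rank → ℤ) →+ L.discGroup :=
  (QuotientAddGroup.mk' _).comp (dualOfCoord hL)

theorem discOfCoord_surjective (hL : L.gram.det ≠ 0) : Function.Surjective (discOfCoord hL) := by
  rintro ⟨x⟩
  obtain ⟨w, hw⟩ := L.mem_dualSub_iff.mp x.2
  refine ⟨w, congrArg _ (Subtype.ext ?_)⟩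
  simp [dualOfCoord, castHom, ← hw, mulVec_mulVec, nonsing_inv_mul _ (isUnit_det_gram_map hL)]

theorem discOfCoord_eq_zero_iff (hL : L.gram.det ≠ 0) (w : Fin L.rank → ℤ) :
    discOfCoord hL w = 0 ↔ ∃ u, L.gram *ᵥ u = w := by
  have hcast : Function.Injective (castVec (N := L.rank)) :=
    fun a b h => funext fun i => Int.cast_injective (congrFun h i)
  rw [discOfCoord, AddMonoidHom.comp_apply, QuotientAddGroup.mk'_apply,
    QuotientAddGroup.eq_zero_iff, AddSubgroup.mem_addSubgroupOf, latticeIn, AddMonoidHom.mem_range]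
  refine exists_congr fun u => ?_
  rw [← hcast.eq_iff, castVec_mulVec]
  have hG := isUnit_det_gram_map hL
  change castVec u = _ *ᵥ castVec w ↔ _
  constructor
  · intro h
    rw [h, mulVec_mulVec, mul_nonsing_inv _ hG, one_mulVec]
  · intro h
    rw [← h, mulVec_mulVec, nonsing_inv_mul _ hG, one_mulVec]

theorem exists_gram_mulVec_eq_iff {ι : Type*} [Fintype ι] (hL : L.gram.det ≠ 0)
    (e : L.discGroup ≃+ (ι → ZMod 2)) (hι : Fintype.card ι = L.rank) (w : Fin L.rank → ℤ) :
    (∃ u, L.gram *ᵥ u = w) ↔ ∀ i, 2 ∣ w i := by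
  rw [← discOfCoord_eq_zero_iff hL, ← e.map_eq_zero_iff]
  exact ((e : L.discGroup →+ _).comp (discOfCoord hL)).eq_zero_iff_two_dvd
    (e.surjective.comp (discOfCoord_surjective hL)) (by simpa using hι) w

end Discriminant

theorem HasSignature.det_gram_ne_zero {L : IntLattice} {p q : ℕ} (h : L.HasSignature p q) :
    L.gram.det ≠ 0 := by
  obtain ⟨-, Q, -, hQ⟩ := h
  intro h0
  have := congrArg det hQ
  rw [det_mul, det_mul, ← Int.cast_det, h0, Int.cast_zero, mul_zero, zero_mul,
    det_diagonal] at this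
  exact (Finset.prod_ne_zero_iff.mpr fun i _ => by split_ifs <;> norm_num) this.symm

variable {S : IntLattice}

theorem two_smul_halfL_gram (heven : ∀ i j, 2 ∣ S.gram i j) :
    (2 : ℤ) • S.halfL.gram = S.gram := by
  ext i j; simp [Int.mul_ediv_cancel' (heven i j)]

theorem HasSignature.halfL {p q : ℕ} (heven : ∀ i j, 2 ∣ S.gram i j) (h : S.HasSignature p q) :
    S.halfL.HasSignature p q := by
  obtain ⟨hrank, Q, hQ, hQS⟩ := h
  refine ⟨hrank, √2 • Q, ?_, ?_⟩
  · rw [det_smul]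
    exact (IsUnit.pow _ (by simp)).mul hQ
  · have hmap : S.gram.map ((↑) : ℤ → ℝ) = (2 : ℝ) • S.halfL.gram.map (↑) := by
      ext i j
      simp only [map_apply, Matrix.smul_apply, smul_eq_mul]
      exact_mod_cast (Int.mul_ediv_cancel' (heven i j)).symm
    rw [← hQS, hmap]
    simp only [transpose_smul, Matrix.smul_mul, Matrix.mul_smul, smul_smul,
      Real.mul_self_sqrt zero_le_two]

theorem MatIsometry.bilin_mulVec {M N : IntLattice} {F : Matrix (Fin N.rank) (Fin M.rank) ℤ}
    (hF : MatIsometry M N F) (x y : Fin M.rank → ℤ) :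
    N.bilin (F *ᵥ x) (F *ᵥ y) = M.bilin x y := by
  rw [bilin, bilin, ← hF.2, dotProduct_transpose_mul_mul_mulVec]

theorem Isometric.isEven {M N : IntLattice} (h : M.Isometric N) (hM : M.IsEven) : N.IsEven := by
  obtain ⟨F, hF⟩ := h
  obtain ⟨F', hFF', -⟩ := hF.1
  intro y
  rw [← one_mulVec y, ← hFF', ← mulVec_mulVec, hF.bilin_mulVec]
  exact hM _

theorem Isometric.of_halfL (heven : ∀ i j, 2 ∣ S.gram i j) {r : ℕ} {d : Fin r → ℤ}
    (h : S.halfL.Isometric (diagL d)) : S.Isometric (diagL ((2 : ℤ) • d)) := by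
  obtain ⟨F, hF, hFd⟩ := h
  have hsmul (F : Matrix (Fin r) (Fin S.rank) ℤ) :
      Fᵀ * diagonal ((2 : ℤ) • d) * F = (2 : ℤ) • (Fᵀ * diagonal d * F) := by
    rw [diagonal_smul, Matrix.mul_smul, Matrix.smul_mul]
  exact ⟨F, hF, (hsmul F).trans ((congrArg ((2 : ℤ) • ·) hFd).trans (two_smul_halfL_gram heven))⟩

end IntLattice

theorem not_isEven_diagL {r : ℕ} {d : Fin r → ℤ} (i : Fin r) (hi : ¬ 2 ∣ d i) :
    ¬ (diagL d).IsEven := fun h => by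
  have := h (Pi.single i 1 : Fin r → ℤ)
  change 2 ∣ Pi.single i 1 ⬝ᵥ diagonal d *ᵥ Pi.single i 1 at this
  rw [mulVec_single_one, single_one_dotProduct, col_apply, diagonal_apply_eq] at this
  exact hi this

theorem exists_dotProduct_mulVec_neg_of_real {ι : Type*} [Fintype ι] (K : Matrix ι ι ℤ)
    {x : ι → ℝ} (hx : x ⬝ᵥ K.map (↑) *ᵥ x < 0) : ∃ v : ι → ℤ, v ⬝ᵥ K *ᵥ v < 0 := by
  -- a rational point of the open set where the form is negative, then clear denominators
  set f : (ι → ℝ) → ℝ := fun y => y ⬝ᵥ K.map (↑) *ᵥ y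
  have hf : Continuous f := continuous_id.dotProduct (continuous_const.matrix_mulVec continuous_id)
  obtain ⟨q, hq⟩ := (DenseRange.piMap fun _ => Rat.denseRange_cast).exists_mem_open
    (isOpen_lt hf continuous_const) ⟨x, hx⟩
  obtain ⟨b, hb⟩ := IsLocalization.exist_integer_multiples_of_finite (nonZeroDivisors ℤ) q
  choose v hv using hb
  refine ⟨v, ?_⟩
  have hvq : (Int.cast ∘ v : ι → ℝ) = (b : ℝ) • Pi.map (fun _ => Rat.cast) q := by
    ext i
    simpa using congrArg ((↑) : ℚ → ℝ) (hv i)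
  have hb0 : (b : ℝ) ≠ 0 := by exact_mod_cast nonZeroDivisors.coe_ne_zero b
  have : ((v ⬝ᵥ K *ᵥ v : ℤ) : ℝ) < 0 := by
    rw [Int.cast_dotProduct_mulVec, hvq, smul_dotProduct, mulVec_smul, dotProduct_smul,
      smul_eq_mul, smul_eq_mul, ← mul_assoc]
    exact mul_neg_of_pos_of_neg (mul_self_pos.mpr hb0) hq
  exact_mod_cast this

theorem eq_zero_of_lorentz {a b : Fin 3 → ℝ} (ha : a 0 ^ 2 + a 1 ^ 2 < a 2 ^ 2)
    (hab : a 0 * b 0 + a 1 * b 1 = a 2 * b 2) (hb : b 0 ^ 2 + b 1 ^ 2 ≤ b 2 ^ 2) : b = 0 := by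
  have hcauchy : (a 2 * b 2) ^ 2 ≤ (a 0 ^ 2 + a 1 ^ 2) * (b 0 ^ 2 + b 1 ^ 2) := by
    rw [← hab]; nlinarith [sq_nonneg (a 0 * b 1 - a 1 * b 0)]
  have hb2 : b 2 = 0 := by
    by_contra h
    have : 0 < b 2 ^ 2 := by positivity
    nlinarith [sq_nonneg (a 0), sq_nonneg (a 1)]
  have hb01 : b 0 ^ 2 + b 1 ^ 2 ≤ 0 := by simpa [hb2] using hb
  have hb0 : b 0 = 0 := by nlinarith [sq_nonneg (b 0), sq_nonneg (b 1)]
  have hb1 : b 1 = 0 := by nlinarith [sq_nonneg (b 0), sq_nonneg (b 1)]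
  ext i
  fin_cases i <;> simp [hb0, hb1, hb2]

section Lorentzian

variable {K : Matrix (Fin 3) (Fin 3) ℤ} {Q : Matrix (Fin 3) (Fin 3) ℝ}

theorem dotProduct_diagonal_lorentz_mulVec (a b : Fin 3 → ℝ) :
    a ⬝ᵥ diagonal ![1, 1, -1] *ᵥ b = a 0 * b 0 + a 1 * b 1 - a 2 * b 2 := by
  simp only [dotProduct, mulVec_diagonal, Fin.sum_univ_three, cons_val_zero, cons_val_one,
    cons_val, Fin.isValue, one_mul, neg_mul, mul_neg]
  ring

theorem det_neg_of_lorentz (hQK : Qᵀ * K.map (↑) * Q = diagonal ![1, 1, -1]) : K.det < 0 := by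
  have := congrArg det hQK
  rw [det_transpose_mul_mul, ← Int.cast_det, det_diagonal] at this
  simp only [Fin.prod_univ_three, cons_val_zero, cons_val_one, cons_val, mul_one, mul_neg,
    Fin.isValue] at this
  have : ((K.det : ℤ) : ℝ) < 0 := by nlinarith [sq_nonneg Q.det]
  exact_mod_cast this

theorem exists_neg_of_lorentz (hQK : Qᵀ * K.map (↑) * Q = diagonal ![1, 1, -1]) :
    ∃ v, v ⬝ᵥ K *ᵥ v < 0 :=
  exists_dotProduct_mulVec_neg_of_real K (x := Q *ᵥ Pi.single 2 1) (by
    rw [← dotProduct_transpose_mul_mul_mulVec, hQK, dotProduct_diagonal_lorentz_mulVec]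
    simp)

theorem pos_of_lorentz_of_orthogonal (hQ : IsUnit Q.det)
    (hQK : Qᵀ * K.map (↑) * Q = diagonal ![1, 1, -1]) {v x : Fin 3 → ℤ}
    (hv : v ⬝ᵥ K *ᵥ v < 0) (hvx : v ⬝ᵥ K *ᵥ x = 0) (hx : x ≠ 0) : 0 < x ⬝ᵥ K *ᵥ x := by
  have hform (y z : Fin 3 → ℤ) : ((y ⬝ᵥ K *ᵥ z : ℤ) : ℝ) =
      (Q⁻¹ *ᵥ (Int.cast ∘ y)) 0 * (Q⁻¹ *ᵥ (Int.cast ∘ z)) 0 +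
      (Q⁻¹ *ᵥ (Int.cast ∘ y)) 1 * (Q⁻¹ *ᵥ (Int.cast ∘ z)) 1 -
      (Q⁻¹ *ᵥ (Int.cast ∘ y)) 2 * (Q⁻¹ *ᵥ (Int.cast ∘ z)) 2 := by
    rw [Int.cast_dotProduct_mulVec, ← transpose_nonsing_inv_mul_mul hQ hQK,
      dotProduct_transpose_mul_mul_mulVec, dotProduct_diagonal_lorentz_mulVec]
  by_contra hle
  have hv' : ((v ⬝ᵥ K *ᵥ v : ℤ) : ℝ) < 0 := by exact_mod_cast hv
  have hvx' : ((v ⬝ᵥ K *ᵥ x : ℤ) : ℝ) = 0 := by exact_mod_cast hvx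
  have hx' : ((x ⬝ᵥ K *ᵥ x : ℤ) : ℝ) ≤ 0 := by exact_mod_cast not_lt.mp hle
  have hb := eq_zero_of_lorentz (a := Q⁻¹ *ᵥ (Int.cast ∘ v)) (b := Q⁻¹ *ᵥ (Int.cast ∘ x))
    (by linarith [hform v v]) (by linarith [hform v x]) (by linarith [hform x x])
  apply hx
  have := congrArg (Q *ᵥ ·) hb
  simp only [mulVec_mulVec, mul_nonsing_inv _ hQ, one_mulVec, mulVec_zero] at this
  ext i
  simpa using congrFun this i

end Lorentzian

section Binary

variable {C : Matrix (Fin 2) (Fin 2) ℤ}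

theorem Matrix.exists_shear_fin_two (ha : 0 < C 0 0) :
    ∃ S : Matrix (Fin 2) (Fin 2) ℤ, S.det = 1 ∧ (Sᵀ * C * S) 0 0 = C 0 0 ∧
      2 * |(Sᵀ * C * S) 0 1| ≤ C 0 0 := by
  set a := C 0 0
  set b := C 0 1
  -- `k` is `b / a` rounded to a nearest integer
  set k := (2 * b + a) / (2 * a)
  have h1 := Int.emod_add_mul_ediv (2 * b + a) (2 * a)
  have h2 := Int.emod_nonneg (2 * b + a) (by omega : 2 * a ≠ 0)
  have h3 := Int.emod_lt_of_pos (2 * b + a) (by omega : 0 < 2 * a)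
  refine ⟨!![1, -k; 0, 1], by simp [det_fin_two], by simp [mul_apply, Fin.sum_univ_two, a], ?_⟩
  have : (!![1, -k; 0, 1]ᵀ * C * !![1, -k; 0, 1]) 0 1 = b - k * a := by
    simp only [mul_apply, Fin.sum_univ_two, transpose_apply, of_apply, cons_val', cons_val_zero,
      cons_val_one, cons_val_fin_one, Fin.isValue, one_mul, zero_mul, add_zero, mul_one, mul_neg,
      a, b]
    ring
  rw [this]
  rcases abs_cases (b - k * a) with ⟨h, -⟩ | ⟨h, -⟩ <;> rw [h] <;> linarith

/-- Lagrange–Gauss reduction of a positive definite binary form. -/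
theorem Matrix.exists_reduced_fin_two (hpos : ∀ x ≠ 0, 0 < x ⬝ᵥ C *ᵥ x) :
    ∃ R : Matrix (Fin 2) (Fin 2) ℤ, IsUnit R.det ∧
      (Rᵀ * C * R) 0 0 ≤ (Rᵀ * C * R) 1 1 ∧ 2 * |(Rᵀ * C * R) 0 1| ≤ (Rᵀ * C * R) 0 0 := by
  induction hN : (C 0 0).toNat using Nat.strong_induction_on generalizing C with
  | _ N ih =>
  obtain ⟨S, hS, hS00, hS01⟩ := exists_shear_fin_two (apply_self_pos hpos 0)
  have hSpos := transpose_mul_mul_pos hpos (T := S) (by rw [hS]; norm_num)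
  by_cases hle : (Sᵀ * C * S) 0 0 ≤ (Sᵀ * C * S) 1 1
  · exact ⟨S, by rw [hS]; exact isUnit_one, hle, hS00 ▸ hS01⟩
  -- otherwise swapping the basis vectors decreases the first diagonal entry
  set W : Matrix (Fin 2) (Fin 2) ℤ := !![0, 1; 1, 0]
  have hW : W.det = -1 := by simp [W, det_fin_two]
  have hW00 : (Wᵀ * (Sᵀ * C * S) * W) 0 0 = (Sᵀ * C * S) 1 1 := by
    simp [W, mul_apply, Fin.sum_univ_two]
  obtain ⟨R, hR, hred⟩ := ih ((Sᵀ * C * S) 1 1).toNat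
    (by have := apply_self_pos hSpos 1; omega) (transpose_mul_mul_pos hSpos (by rw [hW]; norm_num))
    (by rw [hW00])
  refine ⟨S * W * R, ?_, ?_⟩
  · rw [det_mul, det_mul, hS, hW]
    exact (isUnit_one.mul isUnit_one.neg).mul hR
  · rwa [transpose_mul_mul_mul_mul, transpose_mul_mul_mul_mul]

theorem Matrix.three_mul_sq_le_four_mul_det_fin_two {D : Matrix (Fin 2) (Fin 2) ℤ}
    (hD : D.IsSymm) (h11 : D 0 0 ≤ D 1 1) (h01 : 2 * |D 0 1| ≤ D 0 0) :
    3 * D 0 0 ^ 2 ≤ 4 * D.det := by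
  have : 4 * D 0 1 ^ 2 ≤ D 0 0 ^ 2 := by nlinarith [abs_nonneg (D 0 1), sq_abs (D 0 1)]
  rw [det_fin_two, hD.apply 0 1]
  nlinarith [abs_nonneg (D 0 1)]

theorem Matrix.exists_pos_three_mul_sq_le_det_fin_two (hC : C.IsSymm)
    (hpos : ∀ x ≠ 0, 0 < x ⬝ᵥ C *ᵥ x) :
    ∃ u, 0 < u ⬝ᵥ C *ᵥ u ∧ 3 * (u ⬝ᵥ C *ᵥ u) ^ 2 ≤ 4 * C.det := by
  obtain ⟨R, hR, h11, h01⟩ := exists_reduced_fin_two hpos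
  refine ⟨R.col 0, ?_, ?_⟩ <;> rw [← transpose_mul_mul_apply]
  · exact apply_self_pos (transpose_mul_mul_pos hpos hR.ne_zero) 0
  · have := three_mul_sq_le_four_mul_det_fin_two (hC.transpose_mul_mul R) h11 h01
    rwa [det_transpose_mul_mul, Int.isUnit_sq hR, one_mul] at this

theorem Matrix.exists_transpose_mul_mul_eq_one_fin_two (hC : C.IsSymm)
    (hpos : ∀ x ≠ 0, 0 < x ⬝ᵥ C *ᵥ x) (hdet : C.det = 1) :
    ∃ R : Matrix (Fin 2) (Fin 2) ℤ, IsUnit R.det ∧ Rᵀ * C * R = 1 := by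
  obtain ⟨R, hR, h11, h01⟩ := exists_reduced_fin_two hpos
  set D := Rᵀ * C * R
  have hDdet : D.det = 1 := by rw [det_transpose_mul_mul, Int.isUnit_sq hR, one_mul, hdet]
  have hD : D.IsSymm := hC.transpose_mul_mul R
  have h00 : D 0 0 = 1 := by
    have := three_mul_sq_le_four_mul_det_fin_two hD h11 h01
    have := apply_self_pos (transpose_mul_mul_pos hpos hR.ne_zero) 0
    nlinarith
  have h01' : D 0 1 = 0 := abs_eq_zero.mp (by have := abs_nonneg (D 0 1); omega)
  have h11' : D 1 1 = 1 := by simpa [det_fin_two, h00, h01'] using hDdet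
  refine ⟨R, hR, ?_⟩
  change D = 1
  ext i j
  fin_cases i <;> fin_cases j <;> simp [h00, h01', h11', hD.apply 0 1]

end Binary

section Primitive

variable {n : ℕ} {v : Fin n → ℤ}

theorem Primitive.isUnit_of_dvd (hv : Primitive v) {d : ℤ} (hd : ∀ i, d ∣ v i) : IsUnit d :=
  hv.2 d (fun i => v i / d) (funext fun i => (Int.mul_ediv_cancel' (hd i)).symm)

theorem Primitive.mulVec (hv : Primitive v) {K : Matrix (Fin n) (Fin n) ℤ} (hK : IsUnit K.det) :
    Primitive (K *ᵥ v) := by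
  refine ⟨fun h => hv.1 (eq_zero_of_mulVec_eq_zero hK.ne_zero h),
    fun m y hy => hv.2 m (K⁻¹ *ᵥ y) ?_⟩
  rw [← mulVec_smul, ← hy, mulVec_mulVec, nonsing_inv_mul _ hK, one_mulVec]

theorem primitive_of_forall_neg_le {K : Matrix (Fin n) (Fin n) ℤ} (hv : v ⬝ᵥ K *ᵥ v < 0)
    (hmax : ∀ w, w ⬝ᵥ K *ᵥ w < 0 → w ⬝ᵥ K *ᵥ w ≤ v ⬝ᵥ K *ᵥ v) : Primitive v := by
  refine ⟨by rintro rfl; simp at hv, fun g w hvw => ?_⟩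
  have hq : v ⬝ᵥ K *ᵥ v = g ^ 2 * (w ⬝ᵥ K *ᵥ w) := by
    rw [hvw, mulVec_smul, dotProduct_smul, smul_dotProduct, smul_eq_mul, smul_eq_mul]; ring
  have hw : w ⬝ᵥ K *ᵥ w < 0 := by nlinarith [sq_nonneg g]
  have hle := hmax w hw
  rw [hq] at hle
  have hsq : g ^ 2 ≤ 1 := by nlinarith
  have hg1 : g ≤ 1 := by nlinarith
  have hg2 : -1 ≤ g := by nlinarith
  have hg0 : g ≠ 0 := by rintro rfl; rw [zero_pow two_ne_zero, zero_mul] at hq; omega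
  rw [Int.isUnit_iff]
  omega

end Primitive

theorem Int.exists_eq_mul_isCoprime (x y : ℤ) :
    ∃ g a b : ℤ, x = g * a ∧ y = g * b ∧ IsCoprime a b := by
  rcases (Int.gcd x y).eq_zero_or_pos with h | h
  · obtain ⟨rfl, rfl⟩ := Int.gcd_eq_zero_iff.mp h
    exact ⟨0, 1, 0, by simp, by simp, isCoprime_one_left⟩
  · obtain ⟨g, a, b, -, hab, rfl, rfl⟩ := Int.exists_gcd_one' h
    exact ⟨g, a, b, mul_comm _ _, mul_comm _ _, Int.isCoprime_iff_gcd_eq_one.mpr hab⟩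

theorem exists_isUnit_det_row_eq_fin_three {c : Fin 3 → ℤ} (hc : Primitive c) :
    ∃ A : Matrix (Fin 3) (Fin 3) ℤ, IsUnit A.det ∧ A 2 = c := by
  obtain ⟨g, a, b, ha, hb, u, v, huv⟩ := Int.exists_eq_mul_isCoprime (c 0) (c 1)
  obtain ⟨α, β, hαβ⟩ : IsCoprime g (c 2) := by
    rw [Int.isCoprime_iff_gcd_eq_one, ← Int.natAbs_natCast (Int.gcd g (c 2)),
      ← Int.isUnit_iff_natAbs_eq]
    refine hc.isUnit_of_dvd fun i => ?_
    fin_cases i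
    · exact (Int.gcd_dvd_left _ _).trans (ha ▸ dvd_mul_right _ _)
    · exact (Int.gcd_dvd_left _ _).trans (hb ▸ dvd_mul_right _ _)
    · exact Int.gcd_dvd_right _ _
  refine ⟨!![-v, u, 0; -β * a, -β * b, α; g * a, g * b, c 2], ?_, ?_⟩
  · have : (!![-v, u, 0; -β * a, -β * b, α; g * a, g * b, c 2]).det = 1 := by
      simp only [det_fin_three, of_apply, cons_val', cons_val_zero, cons_val_one, cons_val,
        cons_val_fin_one, Fin.isValue, zero_mul, sub_zero, add_zero]
      linear_combination (α * g + β * c 2) * huv + hαβ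
    rw [this]; exact isUnit_one
  · ext j; fin_cases j <;> simp [ha, hb]

/-- The Gram matrix of the orthogonal sum `C ⊕ ⟨a⟩` of a binary form and a rank-one form. -/
def blockDiag21 {R : Type*} [Zero R] (C : Matrix (Fin 2) (Fin 2) R) (a : R) :
    Matrix (Fin 3) (Fin 3) R :=
  !![C 0 0, C 0 1, 0; C 1 0, C 1 1, 0; 0, 0, a]

section BlockDiag21

variable {R : Type*} [CommRing R] (C : Matrix (Fin 2) (Fin 2) R) (a : R)

theorem det_blockDiag21 : (blockDiag21 C a).det = C.det * a := by
  simp only [blockDiag21, det_fin_three, det_fin_two, of_apply, cons_val', cons_val_zero,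
    cons_val_one, cons_val, cons_val_fin_one, Fin.isValue, mul_zero, zero_mul, sub_zero, add_zero]
  ring

theorem dotProduct_blockDiag21_mulVec (x y : Fin 2 → R) (s t : R) :
    ![x 0, x 1, s] ⬝ᵥ blockDiag21 C a *ᵥ ![y 0, y 1, t] = x ⬝ᵥ C *ᵥ y + a * s * t := by
  simp only [blockDiag21, dotProduct, mulVec, Fin.sum_univ_three, Fin.sum_univ_two, of_apply,
    cons_val', cons_val_zero, cons_val_one, cons_val, cons_val_fin_one, Fin.isValue, zero_mul,
    add_zero, zero_add]
  ring

theorem blockDiag21_transpose_mul_mul (P : Matrix (Fin 2) (Fin 2) R) :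
    (blockDiag21 P 1)ᵀ * blockDiag21 C a * blockDiag21 P 1 = blockDiag21 (Pᵀ * C * P) a := by
  ext i j
  fin_cases i <;> fin_cases j <;>
    simp [blockDiag21, mul_apply, Fin.sum_univ_three, Fin.sum_univ_two]

theorem blockDiag21_one : blockDiag21 (1 : Matrix (Fin 2) (Fin 2) R) a = diagonal ![1, 1, a] := by
  ext i j
  fin_cases i <;> fin_cases j <;> simp [blockDiag21]

variable {C a}

theorem Matrix.IsSymm.of_blockDiag21 (h : (blockDiag21 C a).IsSymm) : C.IsSymm := by
  have := h.apply 0 1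
  refine IsSymm.ext fun i j => ?_
  fin_cases i <;> fin_cases j <;> simp_all [blockDiag21]

end BlockDiag21

section Ternary

variable {K : Matrix (Fin 3) (Fin 3) ℤ} {Q : Matrix (Fin 3) (Fin 3) ℝ}
  {T : Matrix (Fin 3) (Fin 3) ℤ} {C : Matrix (Fin 2) (Fin 2) ℤ} {a : ℤ}

theorem exists_transpose_mul_mul_eq_blockDiag21 (hK : K.IsSymm) (hKu : IsUnit K.det)
    {v : Fin 3 → ℤ} (hv : Primitive v) :
    ∃ (T : Matrix (Fin 3) (Fin 3) ℤ) (C : Matrix (Fin 2) (Fin 2) ℤ),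
      T.det ^ 2 = (v ⬝ᵥ K *ᵥ v) ^ 2 ∧ Tᵀ * K * T = blockDiag21 C (v ⬝ᵥ K *ᵥ v) := by
  obtain ⟨A, hA, hA2⟩ := exists_isUnit_det_row_eq_fin_three (hv.mulVec hKu)
  -- the first two columns of `A⁻¹` span the orthogonal complement of `v`
  set T := A⁻¹.updateCol 2 v
  have hcol2 : T.col 2 = v := by ext; simp [T]
  have hG2 (i : Fin 3) (hi : i ≠ 2) : (Tᵀ * K * T) 2 i = 0 := by
    have hcol : T.col i = A⁻¹.col i := by ext; simp [T, hi]
    rw [transpose_mul_mul_apply, hcol2, hcol, hK.dotProduct_mulVec_eq, ← hA2]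
    change (A * A⁻¹) 2 i = 0
    rw [mul_nonsing_inv _ hA, one_apply_ne' hi]
  have hdet : A.det * T.det = v ⬝ᵥ K *ᵥ v := by
    rw [← det_mul, mul_updateCol, mul_nonsing_inv _ hA, det_fin_three]
    simp only [Fin.isValue, ne_eq, Fin.reduceEq, not_false_eq_true, updateCol_ne, one_apply,
      ↓reduceIte, updateCol_self, mul_one, one_mul, mul_zero, zero_mul, sub_zero, add_zero,
      zero_ne_one, one_ne_zero]
    change A 2 ⬝ᵥ v = _
    rw [hA2, ← hK.dotProduct_mulVec_eq]
  refine ⟨T, !![(Tᵀ * K * T) 0 0, (Tᵀ * K * T) 0 1; (Tᵀ * K * T) 1 0, (Tᵀ * K * T) 1 1],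
    by rw [← hdet, mul_pow, Int.isUnit_sq hA, one_mul], ?_⟩
  have hG := hK.transpose_mul_mul T
  ext i j
  fin_cases i <;> fin_cases j <;>
    simp only [blockDiag21, of_apply, cons_val', cons_val_zero, cons_val_one, cons_val,
      cons_val_fin_one, Fin.isValue, Fin.zero_eta, Fin.mk_one, Fin.reduceFinMk]
  · rw [hG.apply 2 0, hG2 0 (by decide)]
  · rw [hG.apply 2 1, hG2 1 (by decide)]
  · exact hG2 0 (by decide)
  · exact hG2 1 (by decide)
  · rw [transpose_mul_mul_apply, hcol2]

theorem exists_forall_neg_le {ι : Type*} [Fintype ι] {K : Matrix ι ι ℤ}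
    (h : ∃ v, v ⬝ᵥ K *ᵥ v < 0) :
    ∃ v, v ⬝ᵥ K *ᵥ v < 0 ∧ ∀ w, w ⬝ᵥ K *ᵥ w < 0 → w ⬝ᵥ K *ᵥ w ≤ v ⬝ᵥ K *ᵥ v := by
  obtain ⟨_, ⟨hz, v, rfl⟩, hmax⟩ := Int.exists_greatest_of_bdd
    (P := fun z => z < 0 ∧ ∃ v, v ⬝ᵥ K *ᵥ v = z) ⟨0, fun z hz => hz.1.le⟩
    (let ⟨v, hv⟩ := h; ⟨_, hv, v, rfl⟩)
  exact ⟨v, hz, fun w hw => hmax _ ⟨hw, w, rfl⟩⟩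

theorem pos_of_transpose_mul_mul_eq_blockDiag21 (hQ : IsUnit Q.det)
    (hQK : Qᵀ * K.map (↑) * Q = diagonal ![1, 1, -1]) (hT : T.det ≠ 0)
    (hTK : Tᵀ * K * T = blockDiag21 C a) (ha : a < 0) (x : Fin 2 → ℤ) (hx : x ≠ 0) :
    0 < x ⬝ᵥ C *ᵥ x := by
  have hform (y z : Fin 2 → ℤ) (s t : ℤ) :
      (T *ᵥ ![y 0, y 1, s]) ⬝ᵥ K *ᵥ (T *ᵥ ![z 0, z 1, t]) = y ⬝ᵥ C *ᵥ z + a * s * t := by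
    rw [← dotProduct_transpose_mul_mul_mulVec, hTK, dotProduct_blockDiag21_mulVec]
  have hne : T *ᵥ ![x 0, x 1, 0] ≠ 0 := fun h => hx <| by
    have := eq_zero_of_mulVec_eq_zero hT h
    ext i; fin_cases i
    · exact congrFun this 0
    · exact congrFun this 1
  have hv := hform 0 0 1 1
  have hvx := hform 0 x 1 0
  have hxx := hform x x 0 0
  simp only [Pi.zero_apply, zero_dotProduct, mul_one, mul_zero, zero_add, add_zero] at hv hvx hxx
  rw [← hxx]
  exact pos_of_lorentz_of_orthogonal hQ hQK (hv.trans_lt ha) hvx hne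

theorem eq_neg_one_of_transpose_mul_mul_eq_blockDiag21 (hTK : Tᵀ * K * T = blockDiag21 C a)
    (hC : C.IsSymm) (hCpos : ∀ x ≠ 0, 0 < x ⬝ᵥ C *ᵥ x) (hCdet : C.det = -a) (ha : a < 0)
    (hmax : ∀ w, w ⬝ᵥ K *ᵥ w < 0 → w ⬝ᵥ K *ᵥ w ≤ a) : a = -1 := by
  obtain ⟨u, hu, hu_le⟩ := exists_pos_three_mul_sq_le_det_fin_two hC hCpos
  have hy : (T *ᵥ ![u 0, u 1, 1]) ⬝ᵥ K *ᵥ (T *ᵥ ![u 0, u 1, 1]) = u ⬝ᵥ C *ᵥ u + a := by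
    rw [← dotProduct_transpose_mul_mul_mulVec, hTK, dotProduct_blockDiag21_mulVec]; ring
  by_contra h
  -- `3 (u²)² ≤ -4a` and `a ≤ -2` force `u² < -a`, so `u² + a` lies strictly between `a` and `0`
  have ha2 : a ≤ -2 := by omega
  have hlt : u ⬝ᵥ C *ᵥ u < -a := by nlinarith
  have := hmax _ (by rw [hy]; linarith)
  rw [hy] at this
  linarith

theorem exists_transpose_mul_mul_eq_diagonal (hK : K.IsSymm) (hKu : IsUnit K.det)
    (hQ : IsUnit Q.det) (hQK : Qᵀ * K.map (↑) * Q = diagonal ![1, 1, -1]) :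
    ∃ M : Matrix (Fin 3) (Fin 3) ℤ, IsUnit M.det ∧ Mᵀ * K * M = diagonal ![1, 1, -1] := by
  obtain ⟨v, hv, hmax⟩ := exists_forall_neg_le (exists_neg_of_lorentz hQK)
  obtain ⟨T, C, hT, hTK⟩ :=
    exists_transpose_mul_mul_eq_blockDiag21 hK hKu (primitive_of_forall_neg_le hv hmax)
  set a := v ⬝ᵥ K *ᵥ v
  have hKdet : K.det = -1 :=
    (Int.isUnit_iff.mp hKu).resolve_left (by have := det_neg_of_lorentz hQK; omega)
  have hTdet : T.det ≠ 0 := by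
    intro h
    rw [h] at hT
    nlinarith
  have hCdet : C.det = -a := by
    have := congrArg det hTK
    rw [det_transpose_mul_mul, hT, hKdet, det_blockDiag21] at this
    exact mul_right_cancel₀ hv.ne (by linarith)
  have hC : C.IsSymm := (hTK ▸ hK.transpose_mul_mul T).of_blockDiag21
  have hCpos := pos_of_transpose_mul_mul_eq_blockDiag21 hQ hQK hTdet hTK hv
  have ha := eq_neg_one_of_transpose_mul_mul_eq_blockDiag21 hTK hC hCpos hCdet hv hmax
  obtain ⟨P, hP, hPC⟩ := exists_transpose_mul_mul_eq_one_fin_two hC hCpos (by rw [hCdet, ha]; rfl)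
  refine ⟨T * blockDiag21 P 1, ?_, ?_⟩
  · rw [det_mul, det_blockDiag21, mul_one]
    exact (IsUnit.of_mul_eq_one T.det (by rw [← sq, hT, ha]; rfl)).mul hP
  · rw [transpose_mul_mul_mul_mul, hTK, blockDiag21_transpose_mul_mul, hPC, ha, blockDiag21_one]

end Ternary

theorem IntLattice.isometric_diagL_of_isUnimodular_of_hasSignature {L : IntLattice}
    (hu : L.IsUnimodular) (hs : L.HasSignature 2 1) : L.Isometric (diagL ![1, 1, -1]) := by
  obtain ⟨r, K, hK⟩ := L
  obtain ⟨rfl, Q, hQ, hQK⟩ := hs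
  have hD : (diagonal fun i : Fin (2 + 1) => if (i : ℕ) < 2 then (1 : ℝ) else -1) =
      diagonal ![1, 1, -1] := by
    congr 1; ext i; fin_cases i <;> simp
  obtain ⟨M, hM, hMK⟩ := exists_transpose_mul_mul_eq_diagonal hK hu hQ (hQK.trans hD)
  exact ⟨(M⁻¹ : Matrix (Fin 3) (Fin 3) ℤ), ⟨M, nonsing_inv_mul _ hM, mul_nonsing_inv _ hM⟩,
    transpose_nonsing_inv_mul_mul hM hMK⟩

theorem even_2elementary_rank3_sig21_general (S : IntLattice)
    (hsig : S.HasSignature 2 1)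
    (hdisc : Nonempty (S.discGroup ≃+ (Fin 3 → ZMod 2))) :
    (∀ i j, 2 ∣ S.gram i j) ∧
    ¬ (S.halfL).IsEven ∧
    (S.halfL).IsUnimodular ∧
    (S.halfL).HasSignature 2 1 ∧
    IntLattice.Isometric S (diagL ![2, 2, -2]) ∧
    IntLattice.Isometric S.halfL (diagL ![1, 1, -1]) := by
  obtain ⟨e⟩ := hdisc
  obtain ⟨heven, hunimod⟩ : (∀ i j, 2 ∣ S.gram i j) ∧ S.halfL.IsUnimodular :=
    two_dvd_and_isUnit_det_half
      (S.exists_gram_mulVec_eq_iff hsig.det_gram_ne_zero e (by simp [hsig.1]))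
  have hsig' := hsig.halfL heven
  have hiso := IntLattice.isometric_diagL_of_isUnimodular_of_hasSignature hunimod hsig'
  refine ⟨heven, fun h => not_isEven_diagL 0 (by decide) (hiso.isEven h), hunimod, hsig', ?_, hiso⟩
  convert hiso.of_halfL heven using 2
  ext i; fin_cases i <;> rfl

/-- An even lattice `S` of rank 3 and signature `(2,1)` with
discriminant group `(ℤ/2)³` satisfies: `S(1/2)` is an integral odd unimodular lattice
of signature `(2,1)`, `S ≅ diag(2,2,-2)`, and `S(1/2) ≅ ⟨1⟩⊕⟨1⟩⊕⟨-1⟩`. -/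
theorem even_2elementary_rank3_sig21 (S : IntLattice) (hrk : S.rank = 3)
    (hev : S.IsEven) (hsig : S.HasSignature 2 1)
    (hdisc : Nonempty (S.discGroup ≃+ (Fin 3 → ZMod 2))) :
    (∀ i j, 2 ∣ S.gram i j) ∧
    ¬ (S.halfL).IsEven ∧
    (S.halfL).IsUnimodular ∧
    (S.halfL).HasSignature 2 1 ∧
    IntLattice.Isometric S (diagL ![2, 2, -2]) ∧
    IntLattice.Isometric S.halfL (diagL ![1, 1, -1]) :=
  even_2elementary_rank3_sig21_general S hsig hdisc
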